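/- Let (A,▷,◁) be an L-dendriform algebra over a field of characteristic zero with associated horizontal pre-Lie algebra (A,•), x•y = x▷y + x◁y, and associated vertical pre-Lie algebra (A,∘), x∘y = x▷y − y◁x. Then (L_▷* − R_◁*, −R_◁*, A*) is a module of (A,•), and (L_▷* + L_◁*, L_◁*, A*) is a module of (A,∘), where L_▷(x)y = x▷y, L_◁(x)y = x◁y, R_◁(y)x = x◁y, and for ρ : A → gl(A), ρ* : A → gl(A*) is defined by ⟨ρ*(x)v*, u⟩ = −⟨v*, ρ(x)u⟩. -/

import Mathlib

set_option maxSynthPendingDepth 3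
set_option synthInstance.maxHeartbeats 400000
set_option maxHeartbeats 800000

/-- A module `(l,r,V)` of a pre-Lie algebra `(A,∘)`. -/
def IsPreLieModule {K A V : Type*} [Field K] [AddCommGroup A] [Module K A]
    [AddCommGroup V] [Module K V]
    (mul : A →ₗ[K] A →ₗ[K] A) (l r : A →ₗ[K] Module.End K V) : Prop :=
  (∀ x y : A, l x * l y - l (mul x y) = l y * l x - l (mul y x)) ∧
  (∀ x y : A, l x * r y - r y * l x = r (mul x y) - r y * r x)

/-- The dual map `ρ* : A → gl(V*)` defined by `⟨ρ*(x)v*, u⟩ = −⟨v*, ρ(x)u⟩`. -/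
noncomputable def dualRep {K A V : Type*} [Field K] [AddCommGroup A] [Module K A]
    [AddCommGroup V] [Module K V]
    (ρ : A →ₗ[K] Module.End K V) : A →ₗ[K] Module.End K (Module.Dual K V) :=
  -((Module.Dual.transpose (R := K) (M := V) (M' := V)) ∘ₗ ρ)

/-- An L-dendriform algebra structure. -/
def IsLDendriform {K A : Type*} [Field K] [AddCommGroup A] [Module K A]
    (tr tl : A →ₗ[K] A →ₗ[K] A) : Prop :=
  (∀ x y z : A, tr x (tr y z) =
      tr (tr x y) z + tr (tl x y) z + tr y (tr x z) - tr (tl y x) z - tr (tr y x) z) ∧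
  (∀ x y z : A, tr x (tl y z) =
      tl (tr x y) z + tl y (tr x z) + tl y (tl x z) - tl (tl y x) z)

/-
Dualizing reverses products (`ρ*(x)σ*(y) = (σ(y)ρ(x))ᵀ`), so the dual `(l* - r*, -r*)` of a
module `(l, r)` satisfies the module identities as soon as `(l, r)` does; the first
one unfolds to the commutator of `r - l`, which the two identities of `(l, r)` compute together.
An L-dendriform algebra makes `(L_▷, R_◁) = (tr, tl.flip)` a module of `(A, •)` and
`(L_▷, -L_◁) = (tr, -tl)` a module of `(A, ∘)`; their duals are the two modules of the theorem.
-/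

section Dual

variable {K A V : Type*} [Field K] [AddCommGroup A] [Module K A] [AddCommGroup V] [Module K V]

@[simp]
theorem dualRep_apply_apply (ρ : A →ₗ[K] Module.End K V) (x : A) (φ : Module.Dual K V) (v : V) :
    dualRep ρ x φ v = -φ (ρ x v) :=
  rfl

theorem dualRep_neg (ρ : A →ₗ[K] Module.End K V) : dualRep (-ρ) = -dualRep ρ := by
  ext x φ v
  simp

theorem IsPreLieModule.dual {mul : A →ₗ[K] A →ₗ[K] A} {l r : A →ₗ[K] Module.End K V}
    (h : IsPreLieModule mul l r) :
    IsPreLieModule mul (dualRep l - dualRep r) (-dualRep r) := by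
  obtain ⟨hll, hlr⟩ := h
  constructor
  · intro x y
    ext φ v
    have e1 := congrArg φ (LinearMap.congr_fun (hll x y) v)
    have e2 := congrArg φ (LinearMap.congr_fun (hlr x y) v)
    have e3 := congrArg φ (LinearMap.congr_fun (hlr y x) v)
    simp only [LinearMap.sub_apply, Module.End.mul_apply, map_sub, dualRep_apply_apply, neg_neg,
      sub_neg_eq_add] at e1 e2 e3 ⊢
    linear_combination -e1 + e2 - e3
  · intro x y
    ext φ v
    have e := congrArg φ (LinearMap.congr_fun (hlr x y) v)
    simp only [LinearMap.sub_apply, LinearMap.neg_apply, Module.End.mul_apply, map_sub,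
      dualRep_apply_apply, neg_neg] at e ⊢
    linear_combination e

end Dual

namespace IsLDendriform

variable {K A : Type*} [Field K] [AddCommGroup A] [Module K A] {tr tl : A →ₗ[K] A →ₗ[K] A}

theorem isPreLieModule_add (h : IsLDendriform tr tl) : IsPreLieModule (tr + tl) tr tl.flip := by
  refine ⟨fun x y => ?_, fun x y => ?_⟩ <;> ext z <;>
    simp only [LinearMap.add_apply, LinearMap.sub_apply, LinearMap.flip_apply,
      Module.End.mul_apply, map_add]
  · linear_combination (norm := module) h.1 x y z
  · linear_combination (norm := module) h.2 x z y

theorem isPreLieModule_sub_flip (h : IsLDendriform tr tl) :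
    IsPreLieModule (tr - tl.flip) tr (-tl) := by
  refine ⟨fun x y => ?_, fun x y => ?_⟩ <;> ext z <;>
    simp only [LinearMap.sub_apply, LinearMap.neg_apply, LinearMap.flip_apply,
      Module.End.mul_apply, map_sub, map_neg]
  · linear_combination (norm := module) h.1 x y z
  · linear_combination (norm := module) -h.2 x y z

end IsLDendriform

theorem dual_modules_of_LDendriform_general {K A : Type*} [Field K]
    [AddCommGroup A] [Module K A]
    (tr tl : A →ₗ[K] A →ₗ[K] A) (h : IsLDendriform tr tl) :
    IsPreLieModule (tr + tl) (dualRep tr - dualRep tl.flip) (-(dualRep tl.flip)) ∧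
    IsPreLieModule (tr - tl.flip) (dualRep tr + dualRep tl) (dualRep tl) := by
  refine ⟨h.isPreLieModule_add.dual, ?_⟩
  simpa only [dualRep_neg, sub_neg_eq_add, neg_neg] using h.isPreLieModule_sub_flip.dual

/-- For an L-dendriform algebra `(A,▷,◁)` with horizontal pre-Lie
product `x•y = x▷y + x◁y` (i.e. `tr + tl`) and vertical pre-Lie product
`x∘y = x▷y − y◁x` (i.e. `tr - tl.flip`): `(L_▷* − R_◁*, −R_◁*, A*)` is a module of
`(A,•)` and `(L_▷* + L_◁*, L_◁*, A*)` is a module of `(A,∘)`, where `L_▷ = tr`,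
`L_◁ = tl`, `R_◁ = tl.flip`. -/
theorem dual_modules_of_LDendriform {K A : Type*} [Field K] [CharZero K]
    [AddCommGroup A] [Module K A]
    (tr tl : A →ₗ[K] A →ₗ[K] A) (h : IsLDendriform tr tl) :
    IsPreLieModule (tr + tl) (dualRep tr - dualRep tl.flip) (-(dualRep tl.flip)) ∧
    IsPreLieModule (tr - tl.flip) (dualRep tr + dualRep tl) (dualRep tl) :=
  dual_modules_of_LDendriform_general tr tl h
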